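/- Let d ∈ ℕ with d ≥ 2. There exist matrices W₁, …, W_{d−1} ∈ ℝ^{1×d}, each with spectral norm ‖W_ℓ‖₂ ≤ 1, such that, defining Φ_ℓ : ℝ^d → ℝ^d by Φ_ℓ(x) = x − 2 W_ℓᵀ ReLU(W_ℓ x), one has e₁ᵀ (Φ_{d−1} ∘ ⋯ ∘ Φ₁)(x) = max{x₁, …, x_d} for all x ∈ ℝ^d, where e₁ is the first canonical basis vector. Likewise there exists such a choice realizing min{x₁, …, x_d}. In particular, the functions x ↦ max{x₁,…,x_d} and x ↦ min{x₁,…,x_d} belong to G_{d,σ}(ℝ^d,ℝ) with σ = ReLU. -/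

import Mathlib

/-!
For `i ≠ j` and the unit row `w = (e_j - e_i) / √2`, the layer `y ↦ y - 2 wᵀ ReLU(w y)` fixes `y`
when `y_i ≥ y_j` and otherwise reflects it across `w^⊥`, which swaps `y_i` and `y_j`. So it is a
compare-and-swap: coordinate `i` becomes `max (y_i, y_j)`, coordinate `j` becomes `min (y_i, y_j)`,
and all other coordinates are untouched. Comparing coordinate `0` successively with coordinates
`1, …, d - 1` leaves the running maximum in coordinate `0`; exchanging the roles of `i` and `j`
gives the running minimum, which is the same induction in the order dual. Both functions are
`1`-Lipschitz, so reading off coordinate `0` puts them in `G_{d,ReLU}(ℝ^d, ℝ)`.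
-/

open scoped BigOperators

noncomputable section

def relu (t : ℝ) : ℝ := max t 0

def entrywise {n : ℕ} (σ : ℝ → ℝ) (x : EuclideanSpace ℝ (Fin n)) : EuclideanSpace ℝ (Fin n) :=
  WithLp.toLp 2 (fun i : Fin n => σ (x i))

def matVec {k h : ℕ} (W : Matrix (Fin k) (Fin h) ℝ) (x : EuclideanSpace ℝ (Fin h)) :
    EuclideanSpace ℝ (Fin k) :=
  Matrix.toEuclideanLin W x

/-- Spectral norm of a real matrix, as the operator norm between Euclidean spaces. -/
def specNorm {k h : ℕ} (W : Matrix (Fin k) (Fin h) ℝ) : ℝ :=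
  ‖LinearMap.toContinuousLinearMap (Matrix.toEuclideanLin W)‖

/-- Membership in `E_{h,σ}` with `σ = ReLU`. -/
def IsEulerStep {h : ℕ} (Φ : EuclideanSpace ℝ (Fin h) → EuclideanSpace ℝ (Fin h)) : Prop :=
  ∃ (k : ℕ) (W : Matrix (Fin k) (Fin h) ℝ) (b : EuclideanSpace ℝ (Fin k)) (τ : ℝ),
    0 ≤ τ ∧ τ ≤ 2 ∧ specNorm W ≤ 1 ∧
    ∀ x, Φ x = x - τ • matVec W.transpose (entrywise relu (matVec W x + b))

def compChain {α : Type*} : (L : ℕ) → (Fin L → α → α) → α → α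
  | 0, _, x => x
  | L + 1, Φ, x => Φ (Fin.last L) (compChain L (fun i => Φ i.castSucc) x)

/-- Membership in `G_{d,σ}(X,ℝ)` with `σ = ReLU`. -/
def InG {d : ℕ} (X : Set (EuclideanSpace ℝ (Fin d))) (g : EuclideanSpace ℝ (Fin d) → ℝ) : Prop :=
  LipschitzOnWith 1 g X ∧
  ∃ (h L : ℕ) (Qhat : Matrix (Fin h) (Fin d) ℝ) (qhat : EuclideanSpace ℝ (Fin h))
    (Φ : Fin L → (EuclideanSpace ℝ (Fin h) → EuclideanSpace ℝ (Fin h)))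
    (v : EuclideanSpace ℝ (Fin h)),
    (∀ ℓ, IsEulerStep (Φ ℓ)) ∧ ‖v‖ = 1 ∧
    ∀ x ∈ X, g x = ∑ i, v i * compChain L Φ (matVec Qhat x + qhat) i

def concatE {h₁ h₂ : ℕ} (u : EuclideanSpace ℝ (Fin h₁)) (v : EuclideanSpace ℝ (Fin h₂)) :
    EuclideanSpace ℝ (Fin (h₁ + h₂)) :=
  WithLp.toLp 2 (Fin.append (fun i => u i) (fun i => v i))

/-- The residual blocks in `Ẽ_{h,σ}`: `(max{x₁,x₂}, min{x₁,x₂}, x₃, Φ'(x₄,…,x_{h+3}))`. -/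
def tildeLayer {h : ℕ} (Φ' : EuclideanSpace ℝ (Fin h) → EuclideanSpace ℝ (Fin h))
    (x : EuclideanSpace ℝ (Fin (h + 3))) : EuclideanSpace ℝ (Fin (h + 3)) :=
  WithLp.toLp 2 (fun j : Fin (h + 3) =>
    if _h0 : (j : ℕ) = 0 then max (x ⟨0, by omega⟩) (x ⟨1, by omega⟩)
    else if _h1 : (j : ℕ) = 1 then min (x ⟨0, by omega⟩) (x ⟨1, by omega⟩)
    else if _h2 : (j : ℕ) = 2 then x ⟨2, by omega⟩
    else Φ' (WithLp.toLp 2 (fun i : Fin h => x ⟨(i : ℕ) + 3, by have := i.isLt; omega⟩))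
      ⟨(j : ℕ) - 3, by have := j.isLt; omega⟩)

/-- Membership in `Ẽ_{h,σ}` with `σ = ReLU`. -/
def IsTildeLayer {h : ℕ} (Φ : EuclideanSpace ℝ (Fin (h + 3)) → EuclideanSpace ℝ (Fin (h + 3))) :
    Prop :=
  ∃ Φ', IsEulerStep Φ' ∧ ∀ x, Φ x = tildeLayer Φ' x

def emb0 {n : ℕ} : Fin 1 → Fin (n + 3) := fun _ => ⟨0, by omega⟩
def emb1 {n : ℕ} : Fin 1 → Fin (n + 3) := fun _ => ⟨1, by omega⟩
def emb2 {n : ℕ} : Fin 1 → Fin (n + 3) := fun _ => ⟨2, by omega⟩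
def embT {n : ℕ} : Fin n → Fin (n + 3) := fun i => ⟨(i : ℕ) + 3, by have := i.isLt; omega⟩

/-- Membership in `R_{d,m}` for `m = (1,1,1,n)`: each block row of the matrix has spectral
norm at most `1`. -/
def memRm {d n : ℕ} (Q : Matrix (Fin (n + 3)) (Fin d) ℝ) : Prop :=
  specNorm (Q.submatrix emb0 id) ≤ 1 ∧ specNorm (Q.submatrix emb1 id) ≤ 1 ∧
    specNorm (Q.submatrix emb2 id) ≤ 1 ∧ specNorm (Q.submatrix embT id) ≤ 1

def rowBlockSum {n r : ℕ} (A : Matrix (Fin (n + 3)) (Fin (n + 3)) ℝ)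
    (e : Fin r → Fin (n + 3)) : ℝ :=
  specNorm (A.submatrix e emb0) + specNorm (A.submatrix e emb1) +
    specNorm (A.submatrix e emb2) + specNorm (A.submatrix e embT)

/-- Membership in `L_m` for `m = (1,1,1,n)`: for each block row, the sum of the spectral
norms of the blocks is at most `1`. -/
def memLm {n : ℕ} (A : Matrix (Fin (n + 3)) (Fin (n + 3)) ℝ) : Prop :=
  rowBlockSum A emb0 ≤ 1 ∧ rowBlockSum A emb1 ≤ 1 ∧
    rowBlockSum A emb2 ≤ 1 ∧ rowBlockSum A embT ≤ 1

/-- `Φ_{L+1} ∘ A_L ∘ ⋯ ∘ Φ₂ ∘ A₁ ∘ Φ₁`, the alternating composition. -/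
def altChain {α : Type*} : (L : ℕ) → (Fin (L + 1) → α → α) → (Fin L → α → α) → α → α
  | 0, Φ, _, x => Φ 0 x
  | L + 1, Φ, A, x =>
      Φ (Fin.last (L + 1)) (A (Fin.last L)
        (altChain L (fun i => Φ i.castSucc) (fun i => A i.castSucc) x))

/-- Membership in the fixed-width class `tilde-G_{d,σ,n+3}(X,ℝ)` with `σ = ReLU`. -/
def InTildeG {d n : ℕ} (X : Set (EuclideanSpace ℝ (Fin d)))
    (g : EuclideanSpace ℝ (Fin d) → ℝ) : Prop :=
  ∃ (L : ℕ) (Qhat : Matrix (Fin (n + 3)) (Fin d) ℝ) (qhat : EuclideanSpace ℝ (Fin (n + 3)))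
    (Φ : Fin (L + 1) → (EuclideanSpace ℝ (Fin (n + 3)) → EuclideanSpace ℝ (Fin (n + 3))))
    (Ahat : Fin L → Matrix (Fin (n + 3)) (Fin (n + 3)) ℝ)
    (ahat : Fin L → EuclideanSpace ℝ (Fin (n + 3)))
    (v : EuclideanSpace ℝ (Fin (n + 3))),
    memRm Qhat ∧ (∀ ℓ, IsTildeLayer (Φ ℓ)) ∧ (∀ ℓ, memLm (Ahat ℓ)) ∧ (∑ i, |v i|) ≤ 1 ∧
    ∀ x ∈ X,
      g x = ∑ i, v i *
        altChain L Φ (fun ℓ u => matVec (Ahat ℓ) u + ahat ℓ) (matVec Qhat x + qhat) i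

end


section MaxMinNetwork

variable {d : ℕ}

lemma relu_div {t c : ℝ} (hc : 0 < c) : relu (t / c) = relu t / c := by
  rw [relu, relu, ← max_div_div_right hc.le, zero_div]

lemma matVec_apply {k h : ℕ} (W : Matrix (Fin k) (Fin h) ℝ) (x : EuclideanSpace ℝ (Fin h))
    (i : Fin k) : matVec W x i = ∑ j, W i j * x j := rfl

lemma matVec_one (x : EuclideanSpace ℝ (Fin d)) : matVec 1 x = x := by
  ext i
  simp [matVec_apply, Matrix.one_apply]

lemma specNorm_le_one_of_sum_sq_le_one (W : Matrix (Fin 1) (Fin d) ℝ)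
    (hW : ∑ j, W 0 j ^ 2 ≤ 1) : specNorm W ≤ 1 := by
  refine ContinuousLinearMap.opNorm_le_bound _ zero_le_one fun x => ?_
  change ‖matVec W x‖ ≤ 1 * ‖x‖
  set w : EuclideanSpace ℝ (Fin d) := WithLp.toLp 2 (W 0)
  have hw : ‖w‖ ≤ 1 := by simpa [EuclideanSpace.norm_eq, w] using hW
  have hWx : ‖matVec W x‖ = |inner ℝ w x| := by
    simp [EuclideanSpace.norm_eq, matVec_apply, PiLp.inner_apply, w, mul_comm,
      Real.sqrt_sq_eq_abs]
  rw [hWx]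
  exact (abs_real_inner_le_norm w x).trans (mul_le_mul_of_nonneg_right hw (norm_nonneg x))

noncomputable def reluStep {k : ℕ} (W : Matrix (Fin k) (Fin d) ℝ)
    (y : EuclideanSpace ℝ (Fin d)) : EuclideanSpace ℝ (Fin d) :=
  y - (2 : ℝ) • matVec W.transpose (entrywise relu (matVec W y))

lemma isEulerStep_reluStep {k : ℕ} {W : Matrix (Fin k) (Fin d) ℝ} (hW : specNorm W ≤ 1) :
    IsEulerStep (reluStep W) :=
  ⟨k, W, 0, 2, zero_le_two, le_rfl, hW, fun x => by rw [add_zero]; rfl⟩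

lemma reluStep_row_apply (W : Matrix (Fin 1) (Fin d) ℝ) (y : EuclideanSpace ℝ (Fin d))
    (k : Fin d) : reluStep W y k = y k - 2 * W 0 k * relu (∑ j, W 0 j * y j) := by
  simp [reluStep, matVec_apply, entrywise, mul_assoc]

noncomputable def compareRow (i j : Fin d) : Matrix (Fin 1) (Fin d) ℝ :=
  Matrix.of fun _ k => (Pi.single j 1 - Pi.single i 1 : Fin d → ℝ) k / √2

lemma reluStep_compareRow_apply (i j : Fin d) (y : EuclideanSpace ℝ (Fin d)) (k : Fin d) :
    reluStep (compareRow i j) y k =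
      y k - (Pi.single j 1 - Pi.single i 1 : Fin d → ℝ) k * relu (y j - y i) := by
  have hsum : ∑ l, compareRow i j 0 l * y l = (y j - y i) / √2 := by
    simp [compareRow, sub_mul, div_mul_eq_mul_div, ← Finset.sum_div, Finset.sum_sub_distrib,
      Pi.single_apply]
  rw [reluStep_row_apply, hsum, relu_div (by positivity)]
  simp only [compareRow, Matrix.of_apply]
  field_simp
  rw [Real.sq_sqrt zero_le_two]
  ring

lemma specNorm_compareRow_le_one (i j : Fin d) : specNorm (compareRow i j) ≤ 1 := by
  apply specNorm_le_one_of_sum_sq_le_one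
  simp only [compareRow, Matrix.of_apply, div_pow, Real.sq_sqrt zero_le_two, ← Finset.sum_div]
  rw [div_le_one two_pos]
  calc ∑ l, (Pi.single j 1 - Pi.single i 1 : Fin d → ℝ) l ^ 2
      ≤ ∑ l, ((Pi.single j 1 : Fin d → ℝ) l + (Pi.single i 1 : Fin d → ℝ) l) := by
        gcongr with l
        simp only [Pi.sub_apply, Pi.single_apply]
        split_ifs <;> norm_num
    _ = 2 := by simp [Finset.sum_add_distrib]; norm_num

section CompareAndSwap

variable {i j : Fin d}

lemma reluStep_compareRow_apply_left (hij : i ≠ j) (y : EuclideanSpace ℝ (Fin d)) :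
    reluStep (compareRow i j) y i = max (y i) (y j) := by
  rw [reluStep_compareRow_apply]
  rcases le_total (y i) (y j) with h | h <;> simp [hij, relu, h]

lemma reluStep_compareRow_apply_right (hij : i ≠ j) (y : EuclideanSpace ℝ (Fin d)) :
    reluStep (compareRow i j) y j = min (y i) (y j) := by
  rw [reluStep_compareRow_apply]
  rcases le_total (y i) (y j) with h | h <;> simp [hij.symm, relu, h]

lemma reluStep_compareRow_apply_of_ne {k : Fin d} (hki : k ≠ i) (hkj : k ≠ j)
    (y : EuclideanSpace ℝ (Fin d)) : reluStep (compareRow i j) y k = y k := by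
  simp [reluStep_compareRow_apply, hki, hkj]

end CompareAndSwap

section Chain

variable {β α : Type*} (c : β → Fin d → α)

lemma compChain_apply_of_lt {L : ℕ} (Φ : Fin L → β → β)
    (hΦ : ∀ (ℓ : Fin L) y (k : Fin d), (ℓ : ℕ) + 1 < k → c (Φ ℓ y) k = c y k)
    (x : β) {k : Fin d} (hk : L < k) : c (compChain L Φ x) k = c x k := by
  induction L with
  | zero => rfl
  | succ L ih =>
    rw [compChain, hΦ _ _ _ (by simpa using hk), ih _ (fun ℓ => hΦ ℓ.castSucc) (by omega)]

lemma compChain_apply_zero_eq_sup' [SemilatticeSup α] {L : ℕ} (hL : L < d) (Φ : Fin L → β → β)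
    (hΦ_zero : ∀ (ℓ : Fin L) y,
      c (Φ ℓ y) ⟨0, by omega⟩ = c y ⟨0, by omega⟩ ⊔ c y ⟨ℓ + 1, by omega⟩)
    (hΦ_above : ∀ (ℓ : Fin L) y (k : Fin d), (ℓ : ℕ) + 1 < k → c (Φ ℓ y) k = c y k)
    (x : β) :
    c (compChain L Φ x) ⟨0, by omega⟩ =
      (Finset.Iic (⟨L, hL⟩ : Fin d)).sup' Finset.nonempty_Iic (c x) := by
  induction L with
  | zero =>
    have h0 : Finset.Iic (⟨0, hL⟩ : Fin d) = {⟨0, hL⟩} := by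
      ext k
      simp [Fin.le_def, Fin.ext_iff]
    rw [Finset.sup'_congr _ h0 (fun _ _ => rfl), Finset.sup'_singleton]
    rfl
  | succ L ih =>
    have hins : Finset.Iic (⟨L + 1, hL⟩ : Fin d) =
        insert ⟨L + 1, hL⟩ (Finset.Iic ⟨L, by omega⟩) := by
      ext k
      simp [Fin.le_def, Fin.ext_iff]
      omega
    rw [compChain, hΦ_zero (Fin.last L),
      ih (by omega) _ (fun ℓ => hΦ_zero ℓ.castSucc) (fun ℓ => hΦ_above ℓ.castSucc),
      compChain_apply_of_lt c _ (fun ℓ => hΦ_above ℓ.castSucc) x (by simp),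
      Finset.sup'_congr _ hins (fun _ _ => rfl), Finset.sup'_insert, sup_comm]
    rfl

end Chain

lemma Fin.Iic_eq_univ (hd : 0 < d) : Finset.Iic (⟨d - 1, by omega⟩ : Fin d) = Finset.univ := by
  ext k
  simp only [Finset.mem_Iic, Fin.le_def, Finset.mem_univ, iff_true]
  omega

lemma compChain_compareRow_apply_zero_eq_sup' (hd : 0 < d) (x : EuclideanSpace ℝ (Fin d)) :
    compChain (d - 1) (fun ℓ => reluStep (compareRow ⟨0, hd⟩ ⟨ℓ + 1, by omega⟩)) x ⟨0, hd⟩ =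
      Finset.univ.sup' ⟨⟨0, hd⟩, Finset.mem_univ _⟩ (fun k => x k) := by
  refine (compChain_apply_zero_eq_sup' (fun y k => y k) (by omega : d - 1 < d)
    (fun ℓ => reluStep (compareRow ⟨0, hd⟩ ⟨ℓ + 1, by omega⟩)) (fun ℓ y => ?_)
    (fun ℓ y k hk => ?_) x).trans (Finset.sup'_congr _ (Fin.Iic_eq_univ hd) fun _ _ => rfl)
  · exact reluStep_compareRow_apply_left (by simp [Fin.ext_iff]) y
  · exact reluStep_compareRow_apply_of_ne (by simp [Fin.ext_iff]; omega)
      (by simp [Fin.ext_iff]; omega) y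

lemma compChain_compareRow_apply_zero_eq_inf' (hd : 0 < d) (x : EuclideanSpace ℝ (Fin d)) :
    compChain (d - 1) (fun ℓ => reluStep (compareRow ⟨ℓ + 1, by omega⟩ ⟨0, hd⟩)) x ⟨0, hd⟩ =
      Finset.univ.inf' ⟨⟨0, hd⟩, Finset.mem_univ _⟩ (fun k => x k) := by
  refine congrArg OrderDual.ofDual <|
    (compChain_apply_zero_eq_sup' (fun y k => OrderDual.toDual (y k)) (by omega : d - 1 < d)
    (fun ℓ => reluStep (compareRow ⟨ℓ + 1, by omega⟩ ⟨0, hd⟩)) (fun ℓ y => ?_)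
    (fun ℓ y k hk => ?_) x).trans (Finset.sup'_congr _ (Fin.Iic_eq_univ hd) fun _ _ => rfl)
  · rw [reluStep_compareRow_apply_right (by simp [Fin.ext_iff]) y, min_comm]
    rfl
  · exact congrArg _ <| reluStep_compareRow_apply_of_ne (by simp [Fin.ext_iff]; omega)
      (by simp [Fin.ext_iff]; omega) y

lemma LipschitzWith.finset_sup' {ι γ : Type*} [PseudoEMetricSpace γ] {K : NNReal}
    {s : Finset ι} (hs : s.Nonempty) {f : ι → γ → ℝ} (hf : ∀ i ∈ s, LipschitzWith K (f i)) :
    LipschitzWith K fun x => s.sup' hs fun i => f i x := by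
  induction hs using Finset.Nonempty.cons_induction with
  | singleton i => simpa using hf i (Finset.mem_singleton_self i)
  | cons i s hi hs ih =>
    simp only [Finset.sup'_cons hs]
    simpa using (hf i (Finset.mem_cons_self i s)).max
      (ih fun j hj => hf j (Finset.mem_cons_of_mem hj))

lemma LipschitzWith.finset_inf' {ι γ : Type*} [PseudoEMetricSpace γ] {K : NNReal}
    {s : Finset ι} (hs : s.Nonempty) {f : ι → γ → ℝ} (hf : ∀ i ∈ s, LipschitzWith K (f i)) :
    LipschitzWith K fun x => s.inf' hs fun i => f i x := by
  induction hs using Finset.Nonempty.cons_induction with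
  | singleton i => simpa using hf i (Finset.mem_singleton_self i)
  | cons i s hi hs ih =>
    simp only [Finset.inf'_cons hs]
    simpa using (hf i (Finset.mem_cons_self i s)).min
      (ih fun j hj => hf j (Finset.mem_cons_of_mem hj))

lemma EuclideanSpace.lipschitzWith_apply (k : Fin d) :
    LipschitzWith 1 fun x : EuclideanSpace ℝ (Fin d) => x k :=
  LipschitzWith.of_dist_le_mul fun x y => by simpa using PiLp.dist_apply_le x y k

lemma inG_univ_of_eq_compChain_apply {L : ℕ} {g : EuclideanSpace ℝ (Fin d) → ℝ}
    (hg : LipschitzWith 1 g) {Φ : Fin L → EuclideanSpace ℝ (Fin d) → EuclideanSpace ℝ (Fin d)}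
    (hΦ : ∀ ℓ, IsEulerStep (Φ ℓ)) (i : Fin d) (hrep : ∀ x, g x = compChain L Φ x i) :
    InG Set.univ g :=
  ⟨hg.lipschitzOnWith, d, L, 1, 0, Φ, EuclideanSpace.single i 1, hΦ, by simp,
    fun x _ => by simp [matVec_one, hrep]⟩

end MaxMinNetwork

/-- The coordinatewise maximum (and minimum) of `d ≥ 2` real numbers is
computed exactly by `d - 1` residual layers `x ↦ x - 2 Wᵀ ReLU(Wx)` with `‖W_ℓ‖₂ ≤ 1`,
reading off the first coordinate; in particular these functions belong to
`G_{d,ReLU}(ℝ^d,ℝ)`. -/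
theorem stmt6 (d : ℕ) (hd : 2 ≤ d) :
    (∃ W : Fin (d - 1) → Matrix (Fin 1) (Fin d) ℝ,
      (∀ ℓ, specNorm (W ℓ) ≤ 1) ∧
      ∀ x : EuclideanSpace ℝ (Fin d),
        compChain (d - 1)
          (fun ℓ y => y - (2 : ℝ) • matVec (W ℓ).transpose (entrywise relu (matVec (W ℓ) y))) x
            ⟨0, by omega⟩ =
          Finset.univ.sup' ⟨(⟨0, by omega⟩ : Fin d), Finset.mem_univ _⟩ (fun i => x i)) ∧
    (∃ W : Fin (d - 1) → Matrix (Fin 1) (Fin d) ℝ,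
      (∀ ℓ, specNorm (W ℓ) ≤ 1) ∧
      ∀ x : EuclideanSpace ℝ (Fin d),
        compChain (d - 1)
          (fun ℓ y => y - (2 : ℝ) • matVec (W ℓ).transpose (entrywise relu (matVec (W ℓ) y))) x
            ⟨0, by omega⟩ =
          Finset.univ.inf' ⟨(⟨0, by omega⟩ : Fin d), Finset.mem_univ _⟩ (fun i => x i)) ∧
    InG (Set.univ : Set (EuclideanSpace ℝ (Fin d)))
      (fun x => Finset.univ.sup' ⟨(⟨0, by omega⟩ : Fin d), Finset.mem_univ _⟩ (fun i => x i)) ∧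
    InG (Set.univ : Set (EuclideanSpace ℝ (Fin d)))
      (fun x => Finset.univ.inf' ⟨(⟨0, by omega⟩ : Fin d), Finset.mem_univ _⟩ (fun i => x i)) := by
  have hd0 : 0 < d := by omega
  have hsup := compChain_compareRow_apply_zero_eq_sup' hd0
  have hinf := compChain_compareRow_apply_zero_eq_inf' hd0
  have hstep : ∀ i j : Fin d, IsEulerStep (reluStep (compareRow i j)) :=
    fun i j => isEulerStep_reluStep (specNorm_compareRow_le_one i j)
  refine ⟨⟨_, fun _ => specNorm_compareRow_le_one _ _, hsup⟩,
    ⟨_, fun _ => specNorm_compareRow_le_one _ _, hinf⟩, ?_, ?_⟩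
  · exact inG_univ_of_eq_compChain_apply
      (LipschitzWith.finset_sup' _ fun k _ => EuclideanSpace.lipschitzWith_apply k)
      (fun _ => hstep _ _) _ fun x => (hsup x).symm
  · exact inG_univ_of_eq_compChain_apply
      (LipschitzWith.finset_inf' _ fun k _ => EuclideanSpace.lipschitzWith_apply k)
      (fun _ => hstep _ _) _ fun x => (hinf x).symm
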